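/- arXiv:2311.03502 — 2 statements merged into one kernel-verified Lean document; each statement's English description precedes it below -/
import Mathlib

section
/- Let φ : ℝ → ℝ be even, differentiable, with φ'(0) = 0, φ'(x) > 0 for x ∈ (0,r), and φ(x) = 0 (hence φ'(x) = 0) for |x| ≥ r. Let x_1 ≤ x_2 ≤ ⋯ ≤ x_n be real numbers. Then Σ_{k=1}^n φ'(x_j − x_k) = 0 for all j = 1,…,n if and only if for every pair j, k, either x_j = x_k or |x_j − x_k| ≥ r. -/
/-- Characterization of fixed points: for `φ` even, differentiable, with minimum
at `0`, strictly increasing on `(0,r)`, and vanishing for `|x| ≥ r` (hence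
`φ' = 0` there), and `x_1 ≤ ⋯ ≤ x_n`, we have `∑_k φ'(x_j - x_k) = 0` for all `j`
iff every pair of points is either equal or at distance at least `r`. -/
theorem fixed_point_characterization (r : ℝ) (hr : 0 < r) (φ : ℝ → ℝ)
    (heven : ∀ x, φ (-x) = φ x) (hdiff : Differentiable ℝ φ)
    (hderiv_nonneg : ∀ x ∈ Set.Ioo 0 r, 0 ≤ deriv φ x)
    (hderiv_zero : deriv φ 0 = 0)
    (hderiv_pos : ∀ x ∈ Set.Ioo 0 r, 0 < deriv φ x)
    (hsupp : ∀ x : ℝ, r ≤ |x| → φ x = 0)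
    (hsupp' : ∀ x : ℝ, r ≤ |x| → deriv φ x = 0)
    (n : ℕ) (x : Fin n → ℝ) (hx : Monotone x) :
    (∀ j, ∑ k, deriv φ (x j - x k) = 0) ↔
      ∀ j k, x j = x k ∨ r ≤ |x j - x k| := by
  -- deriv φ is odd
  have hodd : ∀ t : ℝ, deriv φ (-t) = - deriv φ t := by
    intro t
    have h1 : (fun y : ℝ => φ (-y)) = φ := funext heven
    have h2 : deriv (fun y : ℝ => φ (-y)) t = - deriv φ (-t) := deriv_comp_neg φ t
    rw [h1] at h2
    linarith
  -- deriv φ is nonneg on [0, ∞)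
  have hA : ∀ t : ℝ, 0 ≤ t → 0 ≤ deriv φ t := by
    intro t ht
    rcases eq_or_lt_of_le ht with h | h
    · rw [← h, hderiv_zero]
    · rcases lt_or_ge t r with h' | h'
      · exact hderiv_nonneg t ⟨h, h'⟩
      · rw [hsupp' t (by rwa [abs_of_nonneg ht])]
  -- zeros of deriv φ
  have hC : ∀ t : ℝ, deriv φ t = 0 → t = 0 ∨ r ≤ |t| := by
    have haux : ∀ t : ℝ, 0 ≤ t → deriv φ t = 0 → t = 0 ∨ r ≤ t := by
      intro t ht h0
      rcases eq_or_lt_of_le ht with h | h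
      · exact Or.inl h.symm
      · rcases lt_or_ge t r with h' | h'
        · exact absurd h0 (ne_of_gt (hderiv_pos t ⟨h, h'⟩))
        · exact Or.inr h'
    intro t h0
    rcases le_or_gt 0 t with ht | ht
    · rcases haux t ht h0 with h | h
      · exact Or.inl h
      · exact Or.inr (by rwa [abs_of_nonneg ht])
    · have h0' : deriv φ (-t) = 0 := by rw [hodd, h0, neg_zero]
      rcases haux (-t) (by linarith) h0' with h | h
      · exact Or.inl (by linarith)
      · exact Or.inr (by rwa [abs_of_neg ht])
  constructor
  · -- forward direction
    intro hsum
    have key : ∀ j k, deriv φ (x j - x k) = 0 := by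
      by_contra hbad
      push_neg at hbad
      set S : Finset (Fin n) :=
        Finset.univ.filter (fun j => ∃ k, deriv φ (x j - x k) ≠ 0) with hS
      have hSne : S.Nonempty := by
        obtain ⟨j, k, hjk⟩ := hbad
        exact ⟨j, by simp [hS]; exact ⟨k, hjk⟩⟩
      obtain ⟨j, hjS, hjmax⟩ := S.exists_max_image x hSne
      have hterm : ∀ k : Fin n, 0 ≤ deriv φ (x j - x k) := by
        intro k
        rcases le_or_gt (x k) (x j) with h | h
        · exact hA _ (by linarith)
        · -- x k > x j; show the term is zero
          by_contra hne
          push_neg at hne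
          have hkS : k ∈ S := by
            simp only [hS, Finset.mem_filter, Finset.mem_univ, true_and]
            refine ⟨j, ?_⟩
            intro h0
            have : deriv φ (x j - x k) = 0 := by
              have := hodd (x k - x j)
              rw [neg_sub] at this
              rw [this, h0, neg_zero]
            exact ne_of_lt hne this
          exact absurd (hjmax k hkS) (not_le.mpr h)
      have hall : ∀ k ∈ Finset.univ, deriv φ (x j - x k) = 0 :=
        (Finset.sum_eq_zero_iff_of_nonneg (fun k _ => hterm k)).mp (hsum j)
      simp only [hS, Finset.mem_filter, Finset.mem_univ, true_and] at hjS
      obtain ⟨k, hk⟩ := hjS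
      exact hk (hall k (Finset.mem_univ k))
    intro j k
    rcases hC _ (key j k) with h | h
    · exact Or.inl (by linarith [sub_eq_zero.mp h])
    · exact Or.inr h
  · -- backward direction
    intro h j
    apply Finset.sum_eq_zero
    intro k _
    rcases h j k with hjk | hjk
    · rw [hjk, sub_self, hderiv_zero]
    · exact hsupp' _ hjk
end

section
/- Assume D_y G(·, m) satisfies: (i) (y − y')·(D_yG(y,m) − D_yG(y',m)) ≥ −λ|y−y'|² for all y, y', m; (ii) |D_yG(y,m) − D_yG(y,m̃)| ≤ L·W₁(m, m̃). Let 0 < t < 1/(λ + L), and for each m let y^m(x) be the unique solution of y + t D_yG(y,m) = x. Then |y^m(x) − y^{m̃}(x)| ≤ (tL/(1 − tλ)) W₁(m, m̃) for all x, and tL/(1−tλ) < 1. -/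
/-!
Subtracting the two equations `y + t D_yG(y, m) = x` and `y' + t D_yG(y', m̃) = x` and pairing
the difference with `y - y'` gives `|y - y'|² = -t (y - y')·(D_yG(y, m) - D_yG(y', m))
- t (y - y')·(D_yG(y', m) - D_yG(y', m̃))`. Semi-monotonicity bounds the first term by
`tλ|y - y'|²` and the Lipschitz bound in `m` bounds the second by `tL W₁(m, m̃) |y - y'|`, so
`(1 - tλ)|y - y'| ≤ tL W₁(m, m̃)`; the step-size condition makes `1 - tλ > tL ≥ 0`.
-/

open RealInnerProductSpace

lemma mul_add_lt_one_of_lt_one_div {t a b : ℝ} (ht : 0 < t) (h : t < 1 / (a + b)) :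
    t * (a + b) < 1 := by
  have hab : 0 < a + b := by
    by_contra! hab
    linarith [one_div_nonpos.2 hab]
  exact (lt_div_iff₀ hab).1 h

lemma mul_div_one_sub_mul_lt_one {t lam L : ℝ} (hL : 0 ≤ L) (ht : 0 ≤ t)
    (h : t * (lam + L) < 1) : 0 < 1 - t * lam ∧ t * L / (1 - t * lam) < 1 := by
  have htL : 0 ≤ t * L := mul_nonneg ht hL
  have hpos : 0 < 1 - t * lam := by linarith
  exact ⟨hpos, (div_lt_one hpos).2 (by linarith)⟩

/-- Stability of the implicit step `u + t A u = x` for a semi-monotone `A` under a perturbation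
of `A` that is `ε`-small at the perturbed solution `v`. -/
lemma one_sub_mul_mul_norm_sub_le {E : Type*} [NormedAddCommGroup E] [InnerProductSpace ℝ E]
    {A B : E → E} {lam ε t : ℝ} (ht : 0 ≤ t) {u v x : E}
    (hu : u + t • A u = x) (hv : v + t • B v = x)
    (hmono : -(lam * ‖u - v‖ ^ 2) ≤ ⟪u - v, A u - A v⟫)
    (hclose : ‖A v - B v‖ ≤ ε) :
    (1 - t * lam) * ‖u - v‖ ≤ t * ε := by
  have hdiff : u - v = -t • ((A u - A v) + (A v - B v)) := by
    linear_combination (norm := module) hu - hv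
  have hcs : -⟪u - v, A v - B v⟫ ≤ ‖u - v‖ * ε :=
    (neg_le_abs _).trans <| (abs_real_inner_le_norm _ _).trans <|
      mul_le_mul_of_nonneg_left hclose (norm_nonneg _)
  have hsq : ‖u - v‖ ^ 2 ≤ t * lam * ‖u - v‖ ^ 2 + t * (‖u - v‖ * ε) :=
    calc ‖u - v‖ ^ 2 = ⟪u - v, u - v⟫ := (real_inner_self_eq_norm_sq _).symm
      _ = ⟪u - v, -t • ((A u - A v) + (A v - B v))⟫ := by rw [← hdiff]
      _ = -t * ⟪u - v, A u - A v⟫ - t * ⟪u - v, A v - B v⟫ := by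
        rw [inner_smul_right, inner_add_right]
        ring
      _ ≤ t * lam * ‖u - v‖ ^ 2 + t * (‖u - v‖ * ε) := by
        linarith [mul_le_mul_of_nonneg_left hmono ht, mul_le_mul_of_nonneg_left hcs ht]
  rcases (norm_nonneg (u - v)).eq_or_lt with h0 | hpos
  · rw [← h0]
    nlinarith [(norm_nonneg _).trans hclose]
  · nlinarith

theorem optimal_move_measure_lipschitz_general (d : ℕ) (M : Type*) [MetricSpace M]
    (DG : EuclideanSpace ℝ (Fin d) → M → EuclideanSpace ℝ (Fin d))
    (lam L : ℝ) (hL : 0 ≤ L)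
    (hmono : ∀ (y y' : EuclideanSpace ℝ (Fin d)) (m : M),
      -(lam * ‖y - y'‖ ^ 2) ≤ inner ℝ (y - y') (DG y m - DG y' m))
    (hlip : ∀ (y : EuclideanSpace ℝ (Fin d)) (m m' : M),
      ‖DG y m - DG y m'‖ ≤ L * dist m m')
    (t : ℝ) (ht : 0 < t) (ht' : t < 1 / (lam + L))
    (y : M → EuclideanSpace ℝ (Fin d) → EuclideanSpace ℝ (Fin d))
    (hy : ∀ (m : M) (x : EuclideanSpace ℝ (Fin d)), y m x + t • DG (y m x) m = x) :
    (∀ (m m' : M) (x : EuclideanSpace ℝ (Fin d)),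
      ‖y m x - y m' x‖ ≤ t * L / (1 - t * lam) * dist m m') ∧
      t * L / (1 - t * lam) < 1 := by
  obtain ⟨hpos, hlt⟩ :=
    mul_div_one_sub_mul_lt_one hL ht.le (mul_add_lt_one_of_lt_one_div ht ht')
  refine ⟨fun m m' x => ?_, hlt⟩
  have hstab := one_sub_mul_mul_norm_sub_le (A := fun z => DG z m) (B := fun z => DG z m')
    ht.le (hy m x) (hy m' x) (hmono _ _ m) (hlip _ m m')
  rw [div_mul_eq_mul_div, le_div_iff₀ hpos]
  linarith

/-- Stability of the optimal move in the measure argument. Here `M` is the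
Wasserstein space `(P₁(ℝ^d), W₁)`, viewed abstractly as a metric space, and
`DG y m` stands for `D_y G(y, m)`. If `D_y G` is `λ`-semi-monotone in `y` and
`L`-Lipschitz in `m`, and `0 < t < 1/(λ + L)`, then the solutions `y^m(x)` of
`y + t D_y G(y, m) = x` satisfy `‖y^m(x) - y^m̃(x)‖ ≤ (tL/(1 - tλ)) W₁(m, m̃)`,
with `tL/(1 - tλ) < 1`. -/
theorem optimal_move_measure_lipschitz (d : ℕ) (M : Type*) [MetricSpace M]
    (DG : EuclideanSpace ℝ (Fin d) → M → EuclideanSpace ℝ (Fin d))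
    (lam L : ℝ) (hlam : 0 ≤ lam) (hL : 0 ≤ L)
    (hmono : ∀ (y y' : EuclideanSpace ℝ (Fin d)) (m : M),
      -(lam * ‖y - y'‖ ^ 2) ≤ inner ℝ (y - y') (DG y m - DG y' m))
    (hlip : ∀ (y : EuclideanSpace ℝ (Fin d)) (m m' : M),
      ‖DG y m - DG y m'‖ ≤ L * dist m m')
    (t : ℝ) (ht : 0 < t) (ht' : t < 1 / (lam + L))
    (y : M → EuclideanSpace ℝ (Fin d) → EuclideanSpace ℝ (Fin d))
    (hy : ∀ (m : M) (x : EuclideanSpace ℝ (Fin d)), y m x + t • DG (y m x) m = x) :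
    (∀ (m m' : M) (x : EuclideanSpace ℝ (Fin d)),
      ‖y m x - y m' x‖ ≤ t * L / (1 - t * lam) * dist m m') ∧
      t * L / (1 - t * lam) < 1 :=
  optimal_move_measure_lipschitz_general d M DG lam L hL hmono hlip t ht ht' y hy
end
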